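/- Let p : ℝ → ℂ be locally integrable and even (p(−x) = p(x) for all x). Suppose that the set of Dirichlet eigenfunctions of −d²/dx² + p on the half-line — all nonzero y ∈ L²((0,∞),ℂ) with y, y' locally absolutely continuous on [0,∞), y(0) = 0, and −y'' + p·y = λ·y almost everywhere on (0,∞) for some λ ∈ ℂ — has dense linear span in L²((0,∞),ℂ), and that the set of Neumann eigenfunctions — defined in the same way but with the boundary condition y'(0) = 0 in place of y(0) = 0 — also has dense linear span in L²((0,∞),ℂ). Then the set of eigenfunctions of −d²/dx² + p on the whole line — all nonzero y ∈ L²(ℝ,ℂ) with y, y' locally absolutely continuous on ℝ and −y'' + p·y = λ·y almost everywhere on ℝ for some λ ∈ ℂ — has dense linear span in L²(ℝ,ℂ). -/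

import Mathlib

open MeasureTheory Complex Set Filter
noncomputable section
abbrev muH : Measure ℝ := volume.restrict (Set.Ioi (0:ℝ))

/-- Eigenfunctions of `-d²/dx² + p` on the half line, as elements of `L²((0,∞),ℂ)`:
`y, y'` locally absolutely continuous on `[0,∞)`, `y ∈ L²`, `y` nonzero,
`-y'' + p·y = λ·y` a.e. on `(0,∞)`, and the boundary condition `bc y y'` holds. -/
def halfLineEigen (p : ℝ → ℂ) (bc : (ℝ → ℂ) → (ℝ → ℂ) → Prop) : Set (Lp ℂ 2 muH) :=
  { g | ∃ (y y' y'' : ℝ → ℂ) (lam : ℂ),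
      MemLp y 2 muH ∧
      LocallyIntegrableOn y' (Set.Ici 0) ∧
      (∀ x ∈ Set.Ici (0:ℝ), y x = y 0 + ∫ t in (0:ℝ)..x, y' t) ∧
      LocallyIntegrableOn y'' (Set.Ici 0) ∧
      (∀ x ∈ Set.Ici (0:ℝ), y' x = y' 0 + ∫ t in (0:ℝ)..x, y'' t) ∧
      bc y y' ∧
      ¬ (y =ᵐ[muH] (0 : ℝ → ℂ)) ∧
      (∀ᵐ x ∂muH, -y'' x + p x * y x = lam * y x) ∧
      (g : ℝ → ℂ) =ᵐ[muH] y }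

/-- Eigenfunctions of `-d²/dx² + p` on the whole line, as elements of `L²(ℝ,ℂ)`. -/
def wholeLineEigen (p : ℝ → ℂ) : Set (Lp ℂ 2 (volume : Measure ℝ)) :=
  { g | ∃ (y y' y'' : ℝ → ℂ) (lam : ℂ),
      MemLp y 2 (volume : Measure ℝ) ∧
      LocallyIntegrable y' ∧
      (∀ x : ℝ, y x = y 0 + ∫ t in (0:ℝ)..x, y' t) ∧
      LocallyIntegrable y'' ∧
      (∀ x : ℝ, y' x = y' 0 + ∫ t in (0:ℝ)..x, y'' t) ∧
      ¬ (y =ᵐ[(volume : Measure ℝ)] (0 : ℝ → ℂ)) ∧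
      (∀ᵐ x : ℝ ∂volume, -y'' x + p x * y x = lam * y x) ∧
      (g : ℝ → ℂ) =ᵐ[(volume : Measure ℝ)] y }


/-!
Since `p` is even, the reflection `x ↦ -x` commutes with `-d²/dx² + p`, so the even extension
of a Neumann eigenfunction and the odd extension of a Dirichlet eigenfunction are eigenfunctions
on the whole line; the boundary condition is what keeps the glued function and its derivative
absolutely continuous across `0`. Pairing `f ∈ L²(ℝ)` with such an extension of `y` gives the
pairing of `y` with `f(x) ± f(-x)` on `(0, ∞)`. So if `f` is orthogonal to all whole-line
eigenfunctions, completeness of the two half-line systems forces `f(x) + f(-x)` and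
`f(x) - f(-x)` to vanish for a.e. `x > 0`, i.e. `f = 0`.
-/

open scoped InnerProductSpace ComplexConjugate ENNReal

theorem dense_span_iff_forall_inner_eq_zero {𝕜 E : Type*} [RCLike 𝕜] [NormedAddCommGroup E]
    [InnerProductSpace 𝕜 E] [CompleteSpace E] {s : Set E} :
    Dense (Submodule.span 𝕜 s : Set E) ↔ ∀ x : E, (∀ v ∈ s, ⟪v, x⟫_𝕜 = 0) → x = 0 := by
  rw [Submodule.dense_iff_topologicalClosure_eq_top, Submodule.topologicalClosure_eq_top_iff,
    Submodule.eq_bot_iff]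
  refine forall_congr' fun x => imp_congr_left ?_
  rw [Submodule.mem_orthogonal]
  refine ⟨fun h v hv => h v (Submodule.subset_span hv), fun h v hv =>
    Submodule.span_induction h (inner_zero_left x) (fun u v _ _ hu hv => ?_)
      (fun a u _ hu => ?_) hv⟩
  · rw [inner_add_left, hu, hv, add_zero]
  · rw [inner_smul_left, hu, mul_zero]

theorem inner_eq_integral_conj_mul_of_ae_eq {α : Type*} [MeasurableSpace α] {μ : Measure α}
    {u v : Lp ℂ 2 μ} {g h : α → ℂ} (hu : u =ᵐ[μ] g) (hv : v =ᵐ[μ] h) :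
    ⟪u, v⟫_ℂ = ∫ x, conj (g x) * h x ∂μ := by
  rw [L2.inner_def]
  refine integral_congr_ae ?_
  filter_upwards [hu, hv] with x hux hvx
  rw [hux, hvx, RCLike.inner_apply']

theorem integrable_conj_mul {α : Type*} [MeasurableSpace α] {μ : Measure α} {g h : α → ℂ}
    (hg : MemLp g 2 μ) (hh : MemLp h 2 μ) : Integrable (fun x => conj (g x) * h x) μ :=
  hg.star.integrable_mul hh

theorem ae_of_ae_muH_of_ae_muH_comp_neg {P : ℝ → Prop} (hpos : ∀ᵐ x ∂muH, P x)
    (hneg : ∀ᵐ x ∂muH, P (-x)) : ∀ᵐ x, P x := by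
  have hneg' := (Measure.measurePreserving_neg volume).quasiMeasurePreserving.ae
    ((ae_restrict_iff' measurableSet_Ioi).1 hneg)
  filter_upwards [(ae_restrict_iff' measurableSet_Ioi).1 hpos, hneg', volume.ae_ne 0]
    with x hpos hneg hx0
  rcases hx0.lt_or_gt with hx | hx
  · simpa using hneg (neg_pos.2 hx)
  · exact hpos hx

theorem measurePreserving_neg_restrict_Iic :
    MeasurePreserving (fun x : ℝ => -x) (volume.restrict (Iic 0)) muH := by
  have h := (Measure.measurePreserving_neg (volume : Measure ℝ)).restrict_preimage
    (measurableSet_Ioi (a := (0 : ℝ)))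
  rwa [Set.neg_preimage, Set.neg_Ioi, neg_zero, Measure.restrict_congr_set Iio_ae_eq_Iic] at h

-- `c = 1` gives the even extension of `y` from `(0, ∞)` to `ℝ`, `c = -1` the odd one.
def reflectExt (c : ℂ) (y : ℝ → ℂ) : ℝ → ℂ :=
  (Ioi 0).piecewise y fun x => c * y (-x)

section reflectExt

variable {c : ℂ} {y : ℝ → ℂ} {x : ℝ}

theorem reflectExt_of_pos (hx : 0 < x) : reflectExt c y x = y x :=
  Set.piecewise_eq_of_mem _ _ _ hx

theorem reflectExt_of_nonpos (hx : x ≤ 0) : reflectExt c y x = c * y (-x) :=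
  Set.piecewise_eq_of_notMem _ _ _ hx.not_gt

theorem reflectExt_ae_eq_restrict : reflectExt c y =ᵐ[muH] y :=
  piecewise_ae_eq_restrict measurableSet_Ioi

theorem memLp_reflectExt {q : ℝ≥0∞} (hy : MemLp y q muH) : MemLp (reflectExt c y) q volume := by
  refine MemLp.piecewise measurableSet_Ioi hy ?_
  rw [compl_Ioi]
  exact (hy.comp_measurePreserving measurePreserving_neg_restrict_Iic).const_mul c

theorem locallyIntegrable_reflectExt (hy : LocallyIntegrableOn y (Ici 0)) :
    LocallyIntegrable (reflectExt c y) := by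
  refine locallyIntegrable_iff.2 fun K hK => ?_
  obtain ⟨R, hKR⟩ := hK.isBounded.subset_closedBall 0
  rw [Real.closedBall_eq_Icc, zero_sub, zero_add] at hKR
  have hyR : IntegrableOn y (Icc 0 R) :=
    hy.integrableOn_compact_subset (fun _ hx => hx.1) isCompact_Icc
  have hyR' : IntegrableOn (fun x => c * y (-x)) (Icc (-R) 0) := by
    have h := ((Measure.measurePreserving_neg volume).integrableOn_comp_preimage
      (Homeomorph.neg ℝ).measurableEmbedding).2 hyR
    rw [Set.neg_preimage, Set.neg_Icc, neg_zero] at h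
    exact h.const_mul c
  refine IntegrableOn.mono_set (Integrable.piecewise measurableSet_Ioi ?_ ?_) hKR
  · rw [IntegrableOn, Measure.restrict_restrict measurableSet_Ioi]
    exact hyR.mono_set fun x hx => ⟨hx.1.le, hx.2.2⟩
  · rw [IntegrableOn, Measure.restrict_restrict measurableSet_Ioi.compl, compl_Ioi]
    exact hyR'.mono_set fun x hx => ⟨hx.2.1, hx.1⟩

theorem reflectExt_eq_add_integral {y' : ℝ → ℂ}
    (hftc : ∀ x ∈ Ici (0 : ℝ), y x = y 0 + ∫ t in (0 : ℝ)..x, y' t) (h0 : y 0 = c * y 0) (x : ℝ) :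
    reflectExt c y x = reflectExt c y 0 + ∫ t in (0 : ℝ)..x, reflectExt (-c) y' t := by
  rw [reflectExt_of_nonpos le_rfl, neg_zero]
  rcases lt_or_ge 0 x with hx | hx
  · rw [reflectExt_of_pos hx, hftc x hx.le, ← h0]
    congr 1
    refine intervalIntegral.integral_congr_ae (Eventually.of_forall fun t ht => ?_)
    rw [uIoc_of_le hx.le] at ht
    rw [reflectExt_of_pos ht.1]
  · have hint : ∫ t in (0 : ℝ)..x, reflectExt (-c) y' t = -c * ∫ t in (0 : ℝ)..x, y' (-t) := by
      rw [← intervalIntegral.integral_const_mul]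
      refine intervalIntegral.integral_congr fun t ht => ?_
      rw [uIcc_of_ge hx] at ht
      exact reflectExt_of_nonpos ht.2
    rw [reflectExt_of_nonpos hx, hint, intervalIntegral.integral_comp_neg, neg_zero,
      intervalIntegral.integral_symm, hftc (-x) (neg_nonneg.2 hx)]
    ring

theorem reflectExt_ode {p : ℝ → ℂ} (heven : ∀ x, p (-x) = p x) {y'' : ℝ → ℂ} {lam : ℂ}
    (hode : ∀ᵐ x ∂muH, -y'' x + p x * y x = lam * y x) :
    ∀ᵐ x, -reflectExt c y'' x + p x * reflectExt c y x = lam * reflectExt c y x := by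
  refine ae_of_ae_muH_of_ae_muH_comp_neg ?_ ?_ <;>
    filter_upwards [hode, ae_restrict_mem measurableSet_Ioi] with x hx (hx0 : 0 < x)
  · rwa [reflectExt_of_pos hx0, reflectExt_of_pos hx0]
  · rw [reflectExt_of_nonpos (neg_nonpos.2 hx0.le), reflectExt_of_nonpos (neg_nonpos.2 hx0.le),
      neg_neg, heven]
    linear_combination c * hx

theorem reflectExt_not_ae_eq_zero (hy : ¬ y =ᵐ[muH] 0) : ¬ reflectExt c y =ᵐ[volume] 0 :=
  fun h => hy (reflectExt_ae_eq_restrict.symm.trans (ae_restrict_of_ae h))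

theorem integral_conj_reflectExt_mul (hy : MemLp y 2 muH) {F : ℝ → ℂ} (hF : MemLp F 2 volume) :
    ∫ x, conj (reflectExt c y x) * F x = ∫ x in Ioi 0, conj (y x) * (F x + conj c * F (-x)) := by
  have hFneg : MemLp (fun x => F (-x)) 2 volume :=
    hF.comp_measurePreserving (Measure.measurePreserving_neg volume)
  have hneg : ∫ x in Iic 0, conj (reflectExt c y x) * F x
      = ∫ x in Ioi 0, conj (y x) * (conj c * F (-x)) := by
    have h := integral_comp_neg_Iic (0 : ℝ) fun x => conj (y x) * (conj c * F (-x))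
    rw [neg_zero] at h
    rw [← h]
    refine setIntegral_congr_fun measurableSet_Iic fun x hx => ?_
    rw [reflectExt_of_nonpos hx, neg_neg, map_mul]
    ring
  have hpos : ∫ x in Ioi 0, conj (reflectExt c y x) * F x = ∫ x in Ioi 0, conj (y x) * F x :=
    setIntegral_congr_fun measurableSet_Ioi fun x hx => by rw [reflectExt_of_pos hx]
  rw [← integral_add_compl measurableSet_Ioi (integrable_conj_mul (memLp_reflectExt hy) hF),
    compl_Ioi, hneg, hpos, ← integral_add (integrable_conj_mul hy (hF.restrict _))
      (integrable_conj_mul hy ((hFneg.const_mul _).restrict _))]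
  simp_rw [mul_add]

end reflectExt

theorem reflectExt_mem_wholeLineEigen {p : ℝ → ℂ} (heven : ∀ x, p (-x) = p x) {c : ℂ}
    {y y' y'' : ℝ → ℂ} {lam : ℂ} (hy : MemLp y 2 muH) (hy' : LocallyIntegrableOn y' (Ici 0))
    (hftc : ∀ x ∈ Ici (0 : ℝ), y x = y 0 + ∫ t in (0 : ℝ)..x, y' t)
    (hy'' : LocallyIntegrableOn y'' (Ici 0))
    (hftc' : ∀ x ∈ Ici (0 : ℝ), y' x = y' 0 + ∫ t in (0 : ℝ)..x, y'' t)
    (h0 : y 0 = c * y 0) (h0' : y' 0 = -c * y' 0) (hnz : ¬ y =ᵐ[muH] 0)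
    (hode : ∀ᵐ x ∂muH, -y'' x + p x * y x = lam * y x) :
    (memLp_reflectExt hy).toLp (reflectExt c y) ∈ wholeLineEigen p :=
  ⟨reflectExt c y, reflectExt (-c) y', reflectExt c y'', lam, memLp_reflectExt hy,
    locallyIntegrable_reflectExt hy', reflectExt_eq_add_integral hftc h0,
    locallyIntegrable_reflectExt hy'',
    by simpa only [neg_neg] using reflectExt_eq_add_integral hftc' h0',
    reflectExt_not_ae_eq_zero hnz, reflectExt_ode heven hode, (memLp_reflectExt hy).coeFn_toLp⟩

-- `hbc` makes the `c`-reflection of `y` and the `-c`-reflection of `y'` continuous at `0`.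
theorem ae_add_conj_mul_comp_neg_eq_zero {p : ℝ → ℂ} (heven : ∀ x, p (-x) = p x)
    {bc : (ℝ → ℂ) → (ℝ → ℂ) → Prop} {c : ℂ}
    (hbc : ∀ y y', bc y y' → y 0 = c * y 0 ∧ y' 0 = -c * y' 0)
    (hcomplete : ∀ h : Lp ℂ 2 muH, (∀ g ∈ halfLineEigen p bc, ⟪g, h⟫_ℂ = 0) → h = 0)
    {f : Lp ℂ 2 (volume : Measure ℝ)} (hf : ∀ G ∈ wholeLineEigen p, ⟪G, f⟫_ℂ = 0) :
    ∀ᵐ x ∂muH, f x + conj c * f (-x) = 0 := by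
  have hF : MemLp (fun x => f x + conj c * f (-x)) 2 muH :=
    ((Lp.memLp f).add (((Lp.memLp f).comp_measurePreserving
      (Measure.measurePreserving_neg volume)).const_mul _)).restrict _
  refine hF.coeFn_toLp.symm.trans (Lp.eq_zero_iff_ae_eq_zero.1 (hcomplete _ ?_))
  rintro g ⟨y, y', y'', lam, hy, hy', hftc, hy'', hftc', hbcy, hnz, hode, hgy⟩
  obtain ⟨h0, h0'⟩ := hbc y y' hbcy
  calc ⟪g, hF.toLp _⟫_ℂ = ∫ x in Ioi 0, conj (y x) * (f x + conj c * f (-x)) :=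
        inner_eq_integral_conj_mul_of_ae_eq hgy hF.coeFn_toLp
    _ = ∫ x, conj (reflectExt c y x) * f x := (integral_conj_reflectExt_mul hy (Lp.memLp f)).symm
    _ = ⟪(memLp_reflectExt hy).toLp (reflectExt c y), f⟫_ℂ :=
        (inner_eq_integral_conj_mul_of_ae_eq (memLp_reflectExt hy).coeFn_toLp .rfl).symm
    _ = 0 := hf _ (reflectExt_mem_wholeLineEigen heven hy hy' hftc hy'' hftc' h0 h0' hnz hode)

theorem even_potential_whole_line_complete_general
    (p : ℝ → ℂ) (heven : ∀ x : ℝ, p (-x) = p x)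
    (hDirichlet : Dense (↑(Submodule.span ℂ (halfLineEigen p (fun y _ => y 0 = 0))) :
      Set (Lp ℂ 2 muH)))
    (hNeumann : Dense (↑(Submodule.span ℂ (halfLineEigen p (fun _ y' => y' 0 = 0))) :
      Set (Lp ℂ 2 muH))) :
    Dense (↑(Submodule.span ℂ (wholeLineEigen p)) : Set (Lp ℂ 2 (volume : Measure ℝ))) := by
  rw [dense_span_iff_forall_inner_eq_zero] at hDirichlet hNeumann ⊢
  intro f hf
  have heven_part := ae_add_conj_mul_comp_neg_eq_zero heven (c := 1)
    (fun _ _ h => ⟨(one_mul _).symm, by rw [h, mul_zero]⟩) hNeumann hf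
  have hodd_part := ae_add_conj_mul_comp_neg_eq_zero heven (c := -1)
    (fun _ _ h => ⟨by rw [h, mul_zero], by rw [neg_neg, one_mul]⟩) hDirichlet hf
  rw [Lp.eq_zero_iff_ae_eq_zero]
  refine ae_of_ae_muH_of_ae_muH_comp_neg ?_ ?_ <;>
    filter_upwards [heven_part, hodd_part] with x hplus hminus <;>
    simp only [map_one, map_neg, one_mul, neg_one_mul, Pi.zero_apply] at hplus hminus ⊢
  · linear_combination (hplus + hminus) / 2
  · linear_combination (hplus - hminus) / 2

theorem even_potential_whole_line_complete
    (p : ℝ → ℂ) (hp : LocallyIntegrable p) (heven : ∀ x : ℝ, p (-x) = p x)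
    (hDirichlet : Dense (↑(Submodule.span ℂ (halfLineEigen p (fun y _ => y 0 = 0))) :
      Set (Lp ℂ 2 muH)))
    (hNeumann : Dense (↑(Submodule.span ℂ (halfLineEigen p (fun _ y' => y' 0 = 0))) :
      Set (Lp ℂ 2 muH))) :
    Dense (↑(Submodule.span ℂ (wholeLineEigen p)) : Set (Lp ℂ 2 (volume : Measure ℝ))) :=
  even_potential_whole_line_complete_general p heven hDirichlet hNeumann
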